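/- arXiv:1711.08648 — 3 statements merged into one kernel-verified Lean document; each statement's English description precedes it below -/
import Mathlib

section
/- Let ν, μ, μ₁, μ₂, ... be Borel probability measures on ℝ^m and let (a_n) be a sequence in ℝ^m. If μ_n → μ weakly and μ_n ∗ ε_{a_n} → ν weakly as n → ∞, then the sequence (‖a_n‖)_{n∈ℕ} is bounded. -/
open MeasureTheory Filter Topology
open scoped RealInnerProductSpace

noncomputable section

abbrev Vec (m : ℕ) := EuclideanSpace ℝ (Fin m)

/-- Weak convergence of a sequence of (probability) measures on `ℝ^m`:
convergence of the integrals of all bounded continuous functions. -/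
def WeakTendstoSeq {m : ℕ} (μs : ℕ → Measure (Vec m)) (μ : Measure (Vec m)) : Prop :=
  ∀ f : BoundedContinuousFunction (Vec m) ℝ,
    Tendsto (fun n => ∫ x, f x ∂(μs n)) atTop (𝓝 (∫ x, f x ∂μ))

lemma conv_dirac_eq_map {m : ℕ} (μ : Measure (Vec m)) [SFinite μ] (a : Vec m) :
    μ ∗ (Measure.dirac a) = Measure.map (· + a) μ := by
  unfold Measure.conv
  rw [Measure.prod_dirac, Measure.map_map (by fun_prop) (by fun_prop)]
  rfl

/-- Find a radius whose open ball has measure greater than 1/2. -/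
lemma exists_ball_half {m : ℕ} (μ : Measure (Vec m)) [IsProbabilityMeasure μ] :
    ∃ R : ℝ, 0 < R ∧ 1/2 < μ (Metric.ball 0 R) := by
  have hU : ⋃ n : ℕ, Metric.ball (0 : Vec m) n = Set.univ := by
    ext x
    simp only [Set.mem_iUnion, Metric.mem_ball, Set.mem_univ, iff_true]
    obtain ⟨n, hn⟩ := exists_nat_gt (dist x 0)
    exact ⟨n, hn⟩
  have h := tendsto_measure_iUnion_atTop (μ := μ)
    (s := fun n : ℕ => Metric.ball (0 : Vec m) n)
    (fun i j hij => Metric.ball_subset_ball (by exact_mod_cast hij))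
  rw [hU, measure_univ] at h
  have : ∀ᶠ n : ℕ in atTop, 1/2 < μ (Metric.ball (0 : Vec m) n) :=
    h.eventually (eventually_gt_nhds (by norm_num))
  obtain ⟨n, hn⟩ := (this.and (eventually_gt_atTop 0)).exists
  exact ⟨n, by exact_mod_cast hn.2, hn.1⟩

/-- If `μₙ → μ` weakly and `μₙ ∗ ε_{aₙ} → ν` weakly, then `(‖aₙ‖)` is
bounded. -/
theorem shifts_bounded_of_weak_convergence {m : ℕ}
    (ν μ : Measure (Vec m)) (μs : ℕ → Measure (Vec m)) (a : ℕ → Vec m)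
    [IsProbabilityMeasure ν] [IsProbabilityMeasure μ] [∀ n, IsProbabilityMeasure (μs n)]
    (h1 : WeakTendstoSeq μs μ)
    (h2 : WeakTendstoSeq (fun n => (μs n) ∗ (Measure.dirac (a n))) ν) :
    ∃ C : ℝ, ∀ n, ‖a n‖ ≤ C := by
  by_contra hC
  push_neg at hC
  -- package as ProbabilityMeasures
  set P : ProbabilityMeasure (Vec m) := ⟨μ, inferInstance⟩
  set Q : ProbabilityMeasure (Vec m) := ⟨ν, inferInstance⟩
  set Ps : ℕ → ProbabilityMeasure (Vec m) := fun n => ⟨μs n, inferInstance⟩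
  set Qs : ℕ → ProbabilityMeasure (Vec m) :=
    fun n => ⟨(μs n) ∗ (Measure.dirac (a n)), inferInstance⟩
  have hP : Tendsto Ps atTop (𝓝 P) :=
    ProbabilityMeasure.tendsto_iff_forall_integral_tendsto.mpr h1
  have hQ : Tendsto Qs atTop (𝓝 Q) :=
    ProbabilityMeasure.tendsto_iff_forall_integral_tendsto.mpr h2
  -- choose radii
  obtain ⟨R₁, hR₁pos, hR₁⟩ := exists_ball_half μ
  obtain ⟨R₂, hR₂pos, hR₂⟩ := exists_ball_half ν
  set R : ℝ := max R₁ R₂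
  have hRpos : 0 < R := lt_of_lt_of_le hR₁pos (le_max_left _ _)
  have hμR : 1/2 < μ (Metric.ball 0 R) :=
    lt_of_lt_of_le hR₁ (measure_mono (Metric.ball_subset_ball (le_max_left _ _)))
  have hνR : 1/2 < ν (Metric.ball 0 R) :=
    lt_of_lt_of_le hR₂ (measure_mono (Metric.ball_subset_ball (le_max_right _ _)))
  -- portmanteau, open balls
  have hball : IsOpen (Metric.ball (0 : Vec m) R) := Metric.isOpen_ball
  have l1 : (P : Measure (Vec m)) (Metric.ball 0 R)
      ≤ atTop.liminf fun n => (Ps n : Measure (Vec m)) (Metric.ball 0 R) :=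
    ProbabilityMeasure.le_liminf_measure_open_of_tendsto hP hball
  have l2 : (Q : Measure (Vec m)) (Metric.ball 0 R)
      ≤ atTop.liminf fun n => (Qs n : Measure (Vec m)) (Metric.ball 0 R) :=
    ProbabilityMeasure.le_liminf_measure_open_of_tendsto hQ hball
  have e1 : ∀ᶠ n in atTop, 1/2 < μs n (Metric.ball (0 : Vec m) R) := by
    have := lt_of_lt_of_le hμR l1
    exact Filter.eventually_lt_of_lt_liminf this
  have e2 : ∀ᶠ n in atTop, 1/2 < ((μs n) ∗ (Measure.dirac (a n))) (Metric.ball (0 : Vec m) R) := by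
    have := lt_of_lt_of_le hνR l2
    exact Filter.eventually_lt_of_lt_liminf this
  obtain ⟨N, hN⟩ := (e1.and e2).exists_forall_of_atTop
  -- choose a bad index
  obtain ⟨n, hn⟩ := hC (2 * R + ∑ k ∈ Finset.range N, ‖a k‖)
  have hnN : N ≤ n := by
    by_contra h
    push_neg at h
    have : ‖a n‖ ≤ ∑ k ∈ Finset.range N, ‖a k‖ :=
      Finset.single_le_sum (fun k _ => norm_nonneg (a k)) (Finset.mem_range.mpr h)
    nlinarith [norm_nonneg (a n)]
  obtain ⟨hμn, hνn⟩ := hN n hnN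
  have haR : 2 * R < ‖a n‖ := by
    have hsum : 0 ≤ ∑ k ∈ Finset.range N, ‖a k‖ :=
      Finset.sum_nonneg (fun k _ => norm_nonneg (a k))
    linarith
  -- rewrite the convolution measure
  have hmap : ((μs n) ∗ (Measure.dirac (a n))) (Metric.ball (0 : Vec m) R)
      = μs n ((· + a n) ⁻¹' Metric.ball (0 : Vec m) R) := by
    rw [conv_dirac_eq_map, Measure.map_apply (by fun_prop) Metric.isOpen_ball.measurableSet]
  rw [hmap] at hνn
  -- disjointness
  have hdisj : Disjoint (Metric.ball (0 : Vec m) R)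
      ((· + a n) ⁻¹' Metric.ball (0 : Vec m) R) := by
    rw [Set.disjoint_left]
    intro x hx hx'
    simp only [Set.mem_preimage, Metric.mem_ball, dist_zero_right] at hx hx'
    have : ‖a n‖ ≤ ‖x + a n‖ + ‖x‖ := by
      have := norm_add_le (x + a n) (-x)
      simpa using this
    linarith
  have hle : μs n (Metric.ball (0 : Vec m) R)
      + μs n ((· + a n) ⁻¹' Metric.ball (0 : Vec m) R) ≤ 1 := by
    rw [← measure_union hdisj
      (Metric.isOpen_ball.measurableSet.preimage (by fun_prop))]
    exact prob_le_one
  have : (1 : ENNReal) < 1 := by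
    calc (1 : ENNReal) = 1/2 + 1/2 := by rw [ENNReal.add_halves]
    _ < μs n (Metric.ball (0 : Vec m) R)
        + μs n ((· + a n) ⁻¹' Metric.ball (0 : Vec m) R) :=
      ENNReal.add_lt_add hμn hνn
    _ ≤ 1 := hle
  exact absurd this (lt_irrefl 1)
end
end

section
/- Let ν, μ, μ₁, μ₂, ... be Borel probability measures on ℝ^m with μ full, let (a_n) be a sequence in ℝ^m and (A_n) a sequence of real m×m matrices. If μ_n → μ weakly and (A_n μ_n) ∗ ε_{a_n} → ν weakly as n → ∞, then both sequences (‖A_n‖)_{n∈ℕ} (operator norms) and (‖a_n‖)_{n∈ℕ} are bounded. -/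
open MeasureTheory Filter Topology Matrix
open scoped RealInnerProductSpace

noncomputable section

/-- The continuous linear map on Euclidean space induced by a matrix. -/
def mulVecL {m : ℕ} (A : Matrix (Fin m) (Fin m) ℝ) : Vec m →L[ℝ] Vec m :=
  LinearMap.toContinuousLinearMap (Matrix.toEuclideanLin A)

/-- Operator norm of a matrix (induced by the Euclidean norm). -/
def opNorm {m : ℕ} (A : Matrix (Fin m) (Fin m) ℝ) : ℝ := ‖mulVecL A‖

/-- Fullness of a measure on `ℝ^m`: not concentrated on any proper affine hyperplane. -/
def IsFull {m : ℕ} (μ : Measure (Vec m)) : Prop :=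
  ∀ u : Vec m, u ≠ 0 → ∀ c : ℝ, μ {x | ⟪u, x⟫ = c} < 1

/-!
Weakly convergent sequences of probability measures are tight. Fullness of `μ` upgrades, by
weak convergence and compactness of the parameters `(u, c)` (unit vector, bounded offset), to a
uniform statement: for some `ε, δ > 0` and all large `n`, every slab `{x | |⟪u, x⟫ - c| ≤ δ}`
with `‖u‖ = 1` misses at least `ε` of the mass of `μₙ`. If `‖Aₙ‖` were large, pick `‖v‖ < 1`
with `‖Aₙᵀ v‖` large: whenever `Aₙ x + aₙ` lies in a fixed ball, which by tightness of the image
measures has probability close to one, `⟪Aₙᵀ v, x⟫ + ⟪v, aₙ⟫ = ⟪v, Aₙ x + aₙ⟫` stays bounded, so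
`x` lies in a slab of width `O(1 / ‖Aₙᵀ v‖)` normal to `Aₙᵀ v`. Once `‖Aₙ‖ ≤ C`, a point `x` in a
high-probability ball for `μₙ` with `Aₙ x + aₙ` in a high-probability ball bounds `‖aₙ‖`.
-/

open Metric Set
open scoped ENNReal InnerProduct

section Slab

variable {E : Type*} [NormedAddCommGroup E] [InnerProductSpace ℝ E]

def slab (u : E) (c δ : ℝ) : Set E := {x | |⟪u, x⟫ - c| ≤ δ}

@[simp]
lemma mem_slab {u x : E} {c δ : ℝ} : x ∈ slab u c δ ↔ |⟪u, x⟫ - c| ≤ δ := Iff.rfl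

lemma isClosed_slab (u : E) (c δ : ℝ) : IsClosed (slab u c δ) :=
  isClosed_le (by fun_prop) continuous_const

lemma mem_slab_of_mem_slab {u u' x : E} {c c' δ δ' : ℝ} (hx : x ∈ slab u' c' δ')
    (h : ‖u - u'‖ * ‖x‖ + |c - c'| + δ' ≤ δ) : x ∈ slab u c δ := by
  have hinner := abs_le.1 (abs_real_inner_le_norm (u - u') x)
  have hx' := abs_le.1 (mem_slab.1 hx)
  rw [inner_sub_left] at hinner
  rw [mem_slab, abs_le]
  constructor <;> linarith [neg_abs_le (c - c'), le_abs_self (c - c')]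

lemma abs_le_of_mem_slab {u x : E} {c δ : ℝ} (hu : ‖u‖ = 1) (hx : x ∈ slab u c δ) :
    |c| ≤ ‖x‖ + δ := by
  have hinner := abs_le.1 (abs_real_inner_le_norm u x)
  have hx' := abs_le.1 (mem_slab.1 hx)
  rw [hu, one_mul] at hinner
  rw [abs_le]
  constructor <;> linarith

lemma ae_inner_eq_of_forall_measure_ball_inter_compl_slab_eq_zero [MeasurableSpace E]
    {μ : Measure E} {u : E} {c : ℝ} (h : ∀ δ > 0, ∀ R, μ (ball 0 R ∩ (slab u c δ)ᶜ) = 0) :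
    ∀ᵐ x ∂μ, ⟪u, x⟫ = c := by
  have hae : ∀ᵐ x ∂μ, ∀ j k : ℕ, x ∉ ball 0 k ∩ (slab u c (1 / (j + 1)))ᶜ := by
    simp only [ae_all_iff]
    exact fun j k ↦ measure_eq_zero_iff_ae_notMem.1 (h _ (by positivity) k)
  filter_upwards [hae] with x hx
  obtain ⟨k, hk⟩ := exists_nat_gt ‖x‖
  have hslab (j : ℕ) : |⟪u, x⟫ - c| ≤ 1 / (j + 1) := by
    simpa [mem_ball_zero_iff.2 hk] using hx j k
  exact sub_eq_zero.1 (abs_nonpos_iff.1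
    (ge_of_tendsto' tendsto_one_div_add_atTop_nhds_zero_nat hslab))

end Slab

lemma nonempty_inter_of_measure_compl_add_lt_one {α : Type*} [MeasurableSpace α]
    (μ : Measure α) [IsProbabilityMeasure μ] {s t : Set α} (h : μ sᶜ + μ tᶜ < 1) :
    (s ∩ t).Nonempty := by
  by_contra! hst
  refine (measure_union_le (μ := μ) sᶜ tᶜ).not_gt ?_
  rwa [← compl_inter, hst, compl_empty, measure_univ]

lemma abs_le_of_measure_compl_slab_add_lt_one {E : Type*} [NormedAddCommGroup E]
    [InnerProductSpace ℝ E] [MeasurableSpace E] {μ : Measure E} [IsProbabilityMeasure μ]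
    {u : E} (hu : ‖u‖ = 1) {c δ R : ℝ} (h : μ (slab u c δ)ᶜ + μ (closedBall 0 R)ᶜ < 1) :
    |c| ≤ R + δ := by
  obtain ⟨x, hxs, hxR⟩ := nonempty_inter_of_measure_compl_add_lt_one μ h
  linarith [abs_le_of_mem_slab hu hxs, mem_closedBall_zero_iff.1 hxR]

lemma norm_le_of_measure_compl_add_lt_one {E F : Type*} [NormedAddCommGroup E] [NormedSpace ℝ E]
    [NormedAddCommGroup F] [NormedSpace ℝ F] [MeasurableSpace E] {μ : Measure E}
    [IsProbabilityMeasure μ] {T : E →L[ℝ] F} {a : F} {r R : ℝ}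
    (h : μ (closedBall 0 r)ᶜ + μ ((fun x ↦ T x + a) ⁻¹' (closedBall 0 R)ᶜ) < 1) :
    ‖a‖ ≤ R + ‖T‖ * r := by
  obtain ⟨x, hxr, hxR⟩ := nonempty_inter_of_measure_compl_add_lt_one μ h
  calc ‖a‖ = ‖(T x + a) - T x‖ := by rw [add_sub_cancel_left]
    _ ≤ ‖T x + a‖ + ‖T x‖ := norm_sub_le _ _
    _ ≤ R + ‖T‖ * r := add_le_add (mem_closedBall_zero_iff.1 hxR)
        ((T.le_opNorm x).trans (mul_le_mul_of_nonneg_left (mem_closedBall_zero_iff.1 hxr)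
          (norm_nonneg _)))

lemma exists_forall_measure_compl_closedBall_lt {E : Type*} [NormedAddCommGroup E]
    [MeasurableSpace E] [BorelSpace E] [SecondCountableTopology E] [CompleteSpace E]
    {P : ℕ → ProbabilityMeasure E} {P₀ : ProbabilityMeasure E} (hP : Tendsto P atTop (𝓝 P₀))
    {ε : ℝ≥0∞} (hε : 0 < ε) : ∃ R > 0, ∀ n, (P n : Measure E) (closedBall 0 R)ᶜ < ε := by
  have hcomp : IsCompact (closure (range P)) :=
    hP.isCompact_insert_range.closure_of_subset (subset_insert _ _)
  obtain ⟨ε', hε'0, hε'ε⟩ := exists_between hε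
  obtain ⟨K, hK, hKε⟩ := isTightMeasureSet_iff_exists_isCompact_measure_compl_le.1
    (isTightMeasureSet_of_isCompact_closure hcomp) ε' hε'0
  obtain ⟨R, hR, hKR⟩ := hK.isBounded.subset_closedBall_lt 0 0
  exact ⟨R, hR, fun n ↦ ((measure_mono (compl_subset_compl.2 hKR)).trans
    (hKε _ ⟨P n, mem_range_self n, rfl⟩)).trans_lt hε'ε⟩

section NonConcentration

variable {E : Type*} [NormedAddCommGroup E] [InnerProductSpace ℝ E] [MeasurableSpace E]
  [BorelSpace E]

lemma measure_ball_inter_compl_slab_eq_zero_of_tendsto {Q : ℕ → ProbabilityMeasure E}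
    {P₀ : ProbabilityMeasure E} (hQ : Tendsto Q atTop (𝓝 P₀)) {u : ℕ → E} {c δ : ℕ → ℝ}
    {u₀ : E} {c₀ : ℝ} (hu : Tendsto u atTop (𝓝 u₀)) (hc : Tendsto c atTop (𝓝 c₀))
    (hδ : Tendsto δ atTop (𝓝 0))
    (hconc : Tendsto (fun k ↦ (Q k : Measure E) (slab (u k) (c k) (δ k))ᶜ) atTop (𝓝 0))
    {η : ℝ} (hη : 0 < η) (R : ℝ) : (P₀ : Measure E) (ball 0 R ∩ (slab u₀ c₀ η)ᶜ) = 0 := by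
  set G := ball (0 : E) R ∩ (slab u₀ c₀ η)ᶜ
  have hG : IsOpen G := isOpen_ball.inter (isClosed_slab _ _ _).isOpen_compl
  have hgap : Tendsto (fun k ↦ ‖u₀ - u k‖ * R + |c₀ - c k| + δ k) atTop (𝓝 0) := by
    simpa using ((((tendsto_const_nhds (x := u₀)).sub hu).norm.mul_const R).add
      ((tendsto_const_nhds (x := c₀)).sub hc).abs).add hδ
  have hsub : ∀ᶠ k in atTop, G ⊆ (slab (u k) (c k) (δ k))ᶜ := by
    filter_upwards [hgap.eventually (gt_mem_nhds hη)] with k hk x ⟨hxR, hxη⟩ hxk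
    refine hxη (mem_slab_of_mem_slab hxk (le_of_lt ?_))
    have : ‖u₀ - u k‖ * ‖x‖ ≤ ‖u₀ - u k‖ * R :=
      mul_le_mul_of_nonneg_left (mem_ball_zero_iff.1 hxR).le (norm_nonneg _)
    linarith
  have hQG : Tendsto (fun k ↦ (Q k : Measure E) G) atTop (𝓝 0) :=
    tendsto_of_tendsto_of_tendsto_of_le_of_le' tendsto_const_nhds hconc
      (.of_forall fun _ ↦ zero_le) (hsub.mono fun _ hk ↦ measure_mono hk)
  exact le_antisymm ((ProbabilityMeasure.le_liminf_measure_open_of_tendsto hQ hG).trans_eq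
    hQG.liminf_eq) zero_le

theorem exists_eventually_le_measure_compl_slab [FiniteDimensional ℝ E]
    {P : ℕ → ProbabilityMeasure E} {P₀ : ProbabilityMeasure E} (hP : Tendsto P atTop (𝓝 P₀))
    (hfull : ∀ u : E, u ≠ 0 → ∀ c : ℝ, (P₀ : Measure E) {x | ⟪u, x⟫ = c} < 1) :
    ∃ ε > 0, ∃ δ > 0, ∀ᶠ n in atTop,
      ∀ u : E, ‖u‖ = 1 → ∀ c, ε ≤ (P n : Measure E) (slab u c δ)ᶜ := by
  by_contra! h
  -- `ε k ≤ 1 / 2` makes every bad slab meet a ball of fixed radius, which bounds its offset.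
  set ε : ℕ → ℝ≥0∞ := fun k ↦ ((k + 2 : ℕ) : ℝ≥0∞)⁻¹
  set δ : ℕ → ℝ := fun k ↦ 1 / (k + 1)
  have hbad (k : ℕ) : ∃ n ≥ k, ∃ u : E, ‖u‖ = 1 ∧ ∃ c,
      (P n : Measure E) (slab u c (δ k))ᶜ < ε k :=
    (h (ε k) (by simp [ε]) (δ k) (by positivity)).forall_exists_of_atTop k
  choose n hn u hu c hc using hbad
  obtain ⟨R, -, hR⟩ := exists_forall_measure_compl_closedBall_lt hP (ε := 2⁻¹) (by simp)
  have hc_mem (k : ℕ) : c k ∈ Icc (-(R + 1)) (R + 1) := by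
    have hεk : ε k ≤ 2⁻¹ := ENNReal.inv_le_inv.2 (by norm_cast; omega)
    have hδk : δ k ≤ 1 := div_le_one_of_le₀ (by linarith [k.cast_nonneg (α := ℝ)]) (by positivity)
    have := abs_le_of_measure_compl_slab_add_lt_one (hu k)
      ((ENNReal.add_lt_add ((hc k).trans_le hεk) (hR (n k))).trans_eq ENNReal.inv_two_add_inv_two)
    exact abs_le.1 (by linarith)
  obtain ⟨⟨u₀, c₀⟩, ⟨hu₀, -⟩, φ, hφ, hlim⟩ :=
    ((isCompact_sphere (0 : E) 1).prod isCompact_Icc).tendsto_subseq (x := fun k ↦ (u k, c k))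
      fun k ↦ ⟨mem_sphere_zero_iff_norm.2 (hu k), hc_mem k⟩
  have hnφ : Tendsto (n ∘ φ) atTop atTop :=
    (tendsto_atTop_mono hn tendsto_id).comp hφ.tendsto_atTop
  have hε : Tendsto ε atTop (𝓝 0) :=
    ENNReal.tendsto_inv_nat_nhds_zero.comp (tendsto_add_atTop_nat 2)
  have hconc : Tendsto (fun k ↦ (P (n (φ k)) : Measure E) (slab (u (φ k)) (c (φ k)) (δ (φ k)))ᶜ)
      atTop (𝓝 0) :=
    tendsto_of_tendsto_of_tendsto_of_le_of_le tendsto_const_nhds (hε.comp hφ.tendsto_atTop)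
      (fun _ ↦ zero_le) (fun k ↦ (hc (φ k)).le)
  have hhyperplane := ae_inner_eq_of_forall_measure_ball_inter_compl_slab_eq_zero fun η hη R ↦
    measure_ball_inter_compl_slab_eq_zero_of_tendsto (hP.comp hnφ) hlim.fst_nhds hlim.snd_nhds
      (tendsto_one_div_add_atTop_nhds_zero_nat.comp hφ.tendsto_atTop) hconc hη R
  have hmeas : MeasurableSet {x : E | ⟪u₀, x⟫ = c₀} :=
    measurableSet_eq_fun (by fun_prop) measurable_const
  refine (hfull u₀ (ne_zero_of_mem_unit_sphere ⟨u₀, hu₀⟩) c₀).ne ?_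
  rw [← measure_univ (μ := (P₀ : Measure E))]
  exact (ae_iff_measure_eq hmeas.nullMeasurableSet).1 hhyperplane

end NonConcentration

lemma opNorm_le_of_le_measure_compl_slab {E F : Type*} [NormedAddCommGroup E]
    [InnerProductSpace ℝ E] [CompleteSpace E] [NormedAddCommGroup F] [InnerProductSpace ℝ F]
    [CompleteSpace F] [MeasurableSpace E] {μ : Measure E} {T : E →L[ℝ] F} {a : F} {ε : ℝ≥0∞}
    {R δ : ℝ} (hR : 0 ≤ R) (hδ : 0 < δ) (hslab : ∀ u : E, ‖u‖ = 1 → ∀ c, ε ≤ μ (slab u c δ)ᶜ)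
    (hball : μ ((fun x ↦ T x + a) ⁻¹' (closedBall 0 R)ᶜ) < ε) : ‖T‖ ≤ R / δ := by
  by_contra! hT
  rw [← ContinuousLinearMap.adjoint.norm_map T] at hT
  obtain ⟨v, hv, hTv⟩ := (T†).exists_lt_apply_of_lt_opNorm hT
  set w := (T†) v
  have hw : 0 < ‖w‖ := (div_nonneg hR hδ.le).trans_lt hTv
  have hunit : ‖‖w‖⁻¹ • w‖ = 1 := by
    rw [norm_smul, norm_inv, norm_norm, inv_mul_cancel₀ hw.ne']
  have hsub : (fun x ↦ T x + a) ⁻¹' closedBall 0 R ⊆ slab (‖w‖⁻¹ • w) (-(‖w‖⁻¹ * ⟪v, a⟫)) δ := by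
    intro x hx
    have hproj : ⟪‖w‖⁻¹ • w, x⟫ - -(‖w‖⁻¹ * ⟪v, a⟫) = ‖w‖⁻¹ * ⟪v, T x + a⟫ := by
      rw [real_inner_smul_left, ContinuousLinearMap.adjoint_inner_left, inner_add_right]; ring
    rw [mem_slab, hproj, abs_mul, abs_inv, abs_norm, inv_mul_le_iff₀ hw]
    calc |⟪v, T x + a⟫| ≤ ‖v‖ * ‖T x + a‖ := abs_real_inner_le_norm _ _
      _ ≤ 1 * R := mul_le_mul hv.le (mem_closedBall_zero_iff.1 hx) (norm_nonneg _) zero_le_one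
      _ ≤ ‖w‖ * δ := by rw [one_mul]; exact ((div_lt_iff₀ hδ).1 hTv).le
  exact (hslab _ hunit _).not_gt ((measure_mono (compl_subset_compl.2 hsub)).trans_lt hball)

lemma MeasureTheory.Measure.map_conv_dirac {α β : Type*} [MeasurableSpace α] [AddMonoid β]
    [MeasurableSpace β] [MeasurableAdd₂ β] (μ : Measure α) [SFinite μ] {f : α → β}
    (hf : Measurable f) (b : β) : (μ.map f) ∗ Measure.dirac b = μ.map (fun x ↦ f x + b) := by
  rw [Measure.conv_dirac, Measure.map_map (by fun_prop) hf]
  rfl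

/-- If `μₙ → μ` weakly with `μ` full and `(Aₙ μₙ) ∗ ε_{aₙ} → ν` weakly,
then both `(‖Aₙ‖)` (operator norms) and `(‖aₙ‖)` are bounded. -/
theorem operators_and_shifts_bounded_of_weak_convergence {m : ℕ}
    (ν μ : Measure (Vec m)) (μs : ℕ → Measure (Vec m))
    (a : ℕ → Vec m) (A : ℕ → Matrix (Fin m) (Fin m) ℝ)
    [IsProbabilityMeasure ν] [IsProbabilityMeasure μ] [∀ n, IsProbabilityMeasure (μs n)]
    (hfull : IsFull μ)
    (h1 : WeakTendstoSeq μs μ)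
    (h2 : WeakTendstoSeq
      (fun n => ((μs n).map (mulVecL (A n))) ∗ (Measure.dirac (a n))) ν) :
    (∃ C : ℝ, ∀ n, opNorm (A n) ≤ C) ∧ (∃ C : ℝ, ∀ n, ‖a n‖ ≤ C) := by
  set f : ℕ → Vec m → Vec m := fun n x ↦ mulVecL (A n) x + a n
  have hf (n : ℕ) : Measurable (f n) := by fun_prop
  let P (n : ℕ) : ProbabilityMeasure (Vec m) := ⟨μs n, inferInstance⟩
  let Q (n : ℕ) : ProbabilityMeasure (Vec m) :=
    ⟨(μs n).map (f n), Measure.isProbabilityMeasure_map (hf n).aemeasurable⟩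
  have hP : Tendsto P atTop (𝓝 ⟨μ, inferInstance⟩) :=
    ProbabilityMeasure.tendsto_iff_forall_integral_tendsto.2 h1
  simp only [Measure.map_conv_dirac _ (mulVecL _).measurable] at h2
  have hQ : Tendsto Q atTop (𝓝 ⟨ν, inferInstance⟩) :=
    ProbabilityMeasure.tendsto_iff_forall_integral_tendsto.2 h2
  have hQ_apply (n : ℕ) (R : ℝ) :
      (Q n : Measure (Vec m)) (closedBall 0 R)ᶜ = μs n (f n ⁻¹' (closedBall 0 R)ᶜ) :=
    Measure.map_apply (hf n) measurableSet_closedBall.compl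
  obtain ⟨ε, hε, δ, hδ, hslab⟩ := exists_eventually_le_measure_compl_slab hP hfull
  obtain ⟨R, hR, hQR⟩ := exists_forall_measure_compl_closedBall_lt hQ hε
  obtain ⟨C, hC⟩ := (isBoundedUnder_of_eventually_le (hslab.mono fun n hn ↦
    opNorm_le_of_le_measure_compl_slab hR.le hδ hn
      ((hQ_apply n R).symm.trans_lt (hQR n)))).bddAbove_range
  obtain ⟨r₁, hr₁, hPr₁⟩ := exists_forall_measure_compl_closedBall_lt hP (ε := 2⁻¹) (by simp)
  obtain ⟨r₂, -, hQr₂⟩ := exists_forall_measure_compl_closedBall_lt hQ (ε := 2⁻¹) (by simp)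
  refine ⟨⟨C, fun n ↦ hC (mem_range_self n)⟩, r₂ + C * r₁, fun n ↦ ?_⟩
  calc ‖a n‖ ≤ r₂ + opNorm (A n) * r₁ := norm_le_of_measure_compl_add_lt_one
        ((ENNReal.add_lt_add (hPr₁ n) ((hQ_apply n r₂).symm.trans_lt (hQr₂ n))).trans_eq
          ENNReal.inv_two_add_inv_two)
    _ ≤ r₂ + C * r₁ := by gcongr; exact hC (mem_range_self n)
end
end

section
/- Let m ∈ ℕ, α₁, ..., α_m ∈ (0,2), B := diag(1/α₁, ..., 1/α_m) and B̃ := B ⊕ B ∈ L(ℝ^{2m}) (block diagonal). Let ψ̃ : ℝ^{2m} → ℝ be continuous with ψ̃(R x) = ψ̃(x) for every x ∈ ℝ^{2m} and every R ∈ 𝒯(2m), and r·ψ̃(x) = ψ̃(r^{B̃} x) for all r > 0 and x ∈ ℝ^{2m}. Let A be a real m×m matrix with AB = BA. Then for every z ∈ ℂ and every j ∈ {1, ..., m}: ψ̃( ((Re z)·A e_j, −(Im z)·A e_j) ) = |z|^{α_j} · ψ̃( (A e_j, 0) ), where e_j is the j-th standard basis vector of ℝ^m and elements of ℝ^{2m}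 are written as pairs of vectors in ℝ^m. -/
/-!
Write `z = ‖z‖ e^{iθ}` and `v = A e_j`. The block rotation by `θ` carries `(‖z‖ v, 0)` to
`((Re z) v, -(Im z) v)`, so the left-hand side equals `ψ̃(‖z‖ v, 0)`. Because `A` commutes with
`B`, it commutes with every `r^B`, so `v` is an eigenvector of `r^B` with eigenvalue `r^{1/α_j}`;
the scaling relation at `r = ‖z‖^{α_j}` then gives `ψ̃(‖z‖ v, 0) = ‖z‖^{α_j} ψ̃(v, 0)`.
For `z = 0`, the scaling relation at `r = 2` forces `ψ̃(0, 0) = 0`.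
-/

open MeasureTheory Filter Topology Matrix Real
open scoped RealInnerProductSpace

noncomputable section

/-- `matPow s A = s ^ A = exp ((log s) • A)`, the matrix exponential power. -/
def matPow {m : ℕ} (s : ℝ) (A : Matrix (Fin m) (Fin m) ℝ) : Matrix (Fin m) (Fin m) ℝ :=
  NormedSpace.exp (Real.log s • A)

section

variable {m : ℕ}

lemma mulVecL_mulVecL (A B : Matrix (Fin m) (Fin m) ℝ) (x : Vec m) :
    mulVecL A (mulVecL B x) = mulVecL (A * B) x := by
  ext i
  simp [mulVecL, Matrix.toLpLin_apply, mulVec_mulVec]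

lemma mulVecL_diagonal_single (d : Fin m → ℝ) (j : Fin m) :
    mulVecL (diagonal d) (EuclideanSpace.single j 1) = d j • EuclideanSpace.single j 1 := by
  ext i
  by_cases h : i = j <;> simp [mulVecL, Matrix.toLpLin_apply, h]

lemma matPow_diagonal {r : ℝ} (hr : 0 < r) (d : Fin m → ℝ) :
    matPow r (diagonal d) = diagonal fun i => r ^ d i := by
  rw [matPow, ← diagonal_smul, Matrix.exp_diagonal]
  congr 1
  funext i
  rw [Pi.coe_exp, ← Real.exp_eq_exp_ℝ, Real.rpow_def_of_pos hr, Pi.smul_apply, smul_eq_mul]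

lemma Commute.matPow_right {A B : Matrix (Fin m) (Fin m) ℝ} (h : Commute A B) (r : ℝ) :
    Commute A (matPow r B) :=
  (h.smul_right _).exp_right

lemma mulVecL_matPow_diagonal_mulVecL_single {A : Matrix (Fin m) (Fin m) ℝ} {d : Fin m → ℝ}
    (hA : Commute A (diagonal d)) {r : ℝ} (hr : 0 < r) (j : Fin m) :
    mulVecL (matPow r (diagonal d)) (mulVecL A (EuclideanSpace.single j 1)) =
      r ^ d j • mulVecL A (EuclideanSpace.single j 1) := by
  rw [mulVecL_mulVecL, ← (hA.matPow_right r).eq, ← mulVecL_mulVecL, matPow_diagonal hr,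
    mulVecL_diagonal_single, map_smul]

def IsOperatorHomogeneous (ψ : Vec m × Vec m → ℝ) (B : Matrix (Fin m) (Fin m) ℝ) : Prop :=
  ∀ r : ℝ, 0 < r → ∀ x y : Vec m,
    r * ψ (x, y) = ψ (mulVecL (matPow r B) x, mulVecL (matPow r B) y)

def IsBlockRotationInvariant (ψ : Vec m × Vec m → ℝ) : Prop :=
  ∀ (β : ℝ) (x y : Vec m), ψ (cos β • x + sin β • y, (-sin β) • x + cos β • y) = ψ (x, y)

namespace IsOperatorHomogeneous

variable {ψ : Vec m × Vec m → ℝ}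

lemma apply_zero {B : Matrix (Fin m) (Fin m) ℝ} (h : IsOperatorHomogeneous ψ B) :
    ψ (0, 0) = 0 := by
  have h2 := h 2 two_pos 0 0
  rw [map_zero] at h2
  linarith

lemma apply_smul_mulVecL_single {d : Fin m → ℝ} (h : IsOperatorHomogeneous ψ (diagonal d))
    {A : Matrix (Fin m) (Fin m) ℝ} (hA : Commute A (diagonal d)) {j : Fin m} (hd : d j ≠ 0)
    {s : ℝ} (hs : 0 ≤ s) :
    ψ (s • mulVecL A (EuclideanSpace.single j 1), 0) =
      s ^ (d j)⁻¹ * ψ (mulVecL A (EuclideanSpace.single j 1), 0) := by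
  rcases hs.eq_or_lt with rfl | hs
  · rw [zero_smul, h.apply_zero, Real.zero_rpow (inv_ne_zero hd), zero_mul]
  · have hr : 0 < s ^ (d j)⁻¹ := Real.rpow_pos_of_pos hs _
    rw [h _ hr, map_zero, mulVecL_matPow_diagonal_mulVecL_single hA hr,
      ← Real.rpow_mul hs.le, inv_mul_cancel₀ hd, Real.rpow_one]

end IsOperatorHomogeneous

lemma isBlockRotationInvariant_of_Ico {ψ : Vec m × Vec m → ℝ}
    (h : ∀ β : ℝ, 0 ≤ β → β < 2 * π → ∀ x y : Vec m,
      ψ (cos β • x + sin β • y, (-sin β) • x + cos β • y) = ψ (x, y)) :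
    IsBlockRotationInvariant ψ := by
  intro β x y
  obtain ⟨h0, h2π⟩ := toIcoMod_mem_Ico' two_pi_pos β
  have hmod : toIcoMod two_pi_pos 0 β = β - toIcoDiv two_pi_pos 0 β * (2 * π) := by
    rw [← self_sub_toIcoMod_eq_mul, sub_sub_cancel]
  simpa only [hmod, cos_sub_int_mul_two_pi, sin_sub_int_mul_two_pi] using h _ h0 h2π x y

lemma IsBlockRotationInvariant.apply_re_smul_im_smul {ψ : Vec m × Vec m → ℝ}
    (h : IsBlockRotationInvariant ψ) (z : ℂ) (v : Vec m) :
    ψ (z.re • v, (-z.im) • v) = ψ (‖z‖ • v, 0) := by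
  rw [← h z.arg (‖z‖ • v) 0]
  simp only [smul_zero, add_zero, smul_smul, mul_comm _ ‖z‖, Complex.norm_mul_cos_arg, mul_neg,
    Complex.norm_mul_sin_arg]

end

theorem isotropic_component_identity_general {m : ℕ}
    (α : Fin m → ℝ) (hα : ∀ j, α j ∈ Set.Ioo (0 : ℝ) 2)
    (ψ : Vec m × Vec m → ℝ)
    (hrot : ∀ β : ℝ, 0 ≤ β → β < 2 * π → ∀ x y : Vec m,
      ψ (Real.cos β • x + Real.sin β • y, (-Real.sin β) • x + Real.cos β • y) = ψ (x, y))
    (hscale : ∀ r : ℝ, 0 < r → ∀ x y : Vec m,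
      r * ψ (x, y) = ψ (mulVecL (matPow r (Matrix.diagonal fun j => (α j)⁻¹)) x,
        mulVecL (matPow r (Matrix.diagonal fun j => (α j)⁻¹)) y))
    (A : Matrix (Fin m) (Fin m) ℝ)
    (hcomm : A * Matrix.diagonal (fun j => (α j)⁻¹) =
      Matrix.diagonal (fun j => (α j)⁻¹) * A) :
    ∀ (z : ℂ) (j : Fin m),
      ψ (z.re • mulVecL A (EuclideanSpace.single j 1),
        (-z.im) • mulVecL A (EuclideanSpace.single j 1)) =
      ‖z‖ ^ α j * ψ (mulVecL A (EuclideanSpace.single j 1), 0) := by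
  intro z j
  have hαj : (α j)⁻¹ ≠ 0 := inv_ne_zero (hα j).1.ne'
  rw [(isBlockRotationInvariant_of_Ico hrot).apply_re_smul_im_smul,
    IsOperatorHomogeneous.apply_smul_mulVecL_single hscale hcomm hαj (norm_nonneg z), inv_inv]

/-- If `ψ̃` on `ℝ^{2m} = ℝ^m × ℝ^m` is invariant under the block
rotations `𝒯(2m)`, scales as `r·ψ̃(x) = ψ̃(r^{B̃}x)` with `B̃ = B ⊕ B`,
`B = diag(1/α₁,…,1/α_m)`, and `A` commutes with `B`, then
`ψ̃((Re z)·Ae_j, −(Im z)·Ae_j) = |z|^{α_j}·ψ̃(Ae_j, 0)`. -/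
theorem isotropic_component_identity {m : ℕ}
    (α : Fin m → ℝ) (hα : ∀ j, α j ∈ Set.Ioo (0 : ℝ) 2)
    (ψ : Vec m × Vec m → ℝ) (hψc : Continuous ψ)
    (hrot : ∀ β : ℝ, 0 ≤ β → β < 2 * π → ∀ x y : Vec m,
      ψ (Real.cos β • x + Real.sin β • y, (-Real.sin β) • x + Real.cos β • y) = ψ (x, y))
    (hscale : ∀ r : ℝ, 0 < r → ∀ x y : Vec m,
      r * ψ (x, y) = ψ (mulVecL (matPow r (Matrix.diagonal fun j => (α j)⁻¹)) x,
        mulVecL (matPow r (Matrix.diagonal fun j => (α j)⁻¹)) y))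
    (A : Matrix (Fin m) (Fin m) ℝ)
    (hcomm : A * Matrix.diagonal (fun j => (α j)⁻¹) =
      Matrix.diagonal (fun j => (α j)⁻¹) * A) :
    ∀ (z : ℂ) (j : Fin m),
      ψ (z.re • mulVecL A (EuclideanSpace.single j 1),
        (-z.im) • mulVecL A (EuclideanSpace.single j 1)) =
      ‖z‖ ^ α j * ψ (mulVecL A (EuclideanSpace.single j 1), 0) :=
  isotropic_component_identity_general α hα ψ hrot hscale A hcomm
end
end
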